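/- arXiv:1208.5253 — 2 statements merged into one kernel-verified Lean document; each statement's English description precedes it below -/
import Mathlib

section
/- Let C₁ > 0, R ≥ 1, and 0 < δ ≤ 1/C₁. Suppose v : ℝ² → ℝ is continuous on {x : |x| ≥ R}, twice continuously differentiable on {x : |x| > R}, satisfies |v(x)| ≤ δ for all |x| ≥ R, and |Δv(x) − v(x)| ≤ C₁ δ² for all |x| > R. Then for every x with |x| ≥ R one has |v(x)| ≤ δ(1 − C₁δ) e^{R − |x|} + C₁ δ². -/
/-!
Compare `v` with `W = a e^{-⟪u, y⟫} + ε Σᵢ cosh yᵢ + b`, where `u = x / ‖x‖`. The plane wave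
`e^{-⟪u, ·⟫}` takes the place of the radial barrier `e^{-r}`: its Laplacian is exactly
`‖u‖² e^{-⟪u, ·⟫}`, it is at least `e^{-R}` on the sphere `‖y‖ = R`, and it equals `e^{-‖x‖}` at `x`.
The terms `cosh yᵢ` also satisfy `Δ f = f` and force `v - W → -∞`, so `v - W` attains its maximum
on `{‖y‖ ≥ R}`. There `v - W ≤ Δ (v - W)`, which is `≤ 0` at an interior maximum, while `v ≤ W`
on the sphere; hence `v ≤ W` everywhere. Letting `ε → 0` bounds `v`, and the same argument
applied to `-v` bounds `|v|`.
-/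

open MeasureTheory Filter

/-- The Euclidean Laplacian on `ℝ²`: the sum of the two pure second partial derivatives. -/
noncomputable def lap2 (f : EuclideanSpace ℝ (Fin 2) → ℝ) (x : EuclideanSpace ℝ (Fin 2)) : ℝ :=
  ∑ i : Fin 2, iteratedFDeriv ℝ 2 f x ![EuclideanSpace.single i 1, EuclideanSpace.single i 1]

open InnerProductSpace Laplacian Topology
open scoped RealInnerProductSpace

theorem IsLocalMax.deriv_deriv_nonpos {g : ℝ → ℝ} {t : ℝ} (h : IsLocalMax g t)
    (hc : ContinuousAt g t) : deriv (deriv g) t ≤ 0 := by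
  by_contra! hpos
  -- Otherwise `t` is also a local minimum, so `g` is locally constant.
  have hmin : IsLocalMin g t := isLocalMin_of_deriv_deriv_pos hpos h.deriv_eq_zero hc
  have hconst : g =ᶠ[𝓝 t] fun _ ↦ g t := (h.and hmin).mono fun _ hs ↦ le_antisymm hs.1 hs.2
  have hderiv : deriv g =ᶠ[𝓝 t] fun _ ↦ 0 := by
    filter_upwards [hconst.eventuallyEq_nhds] with s hs
    rw [hs.deriv_eq, deriv_const]
  rw [hderiv.deriv_eq, deriv_const] at hpos
  exact hpos.false

theorem IsLocalMax.fderiv_fderiv_apply_self_nonpos {E : Type*} [NormedAddCommGroup E]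
    [NormedSpace ℝ E] {f : E → ℝ} {x : E} (h : IsLocalMax f x) (hf : ContDiffAt ℝ 2 f x)
    (e : E) : fderiv ℝ (fderiv ℝ f) x e e ≤ 0 := by
  set ℓ : ℝ → E := fun t ↦ x + t • e
  have hℓ : ∀ t, HasDerivAt ℓ e t := fun t ↦
    (((hasDerivAt_id t).smul_const e).const_add x).congr_deriv (one_smul ℝ e)
  have hℓ0 : ℓ 0 = x := by simp [ℓ]
  have hℓx : Tendsto ℓ (𝓝 0) (𝓝 x) := hℓ0 ▸ (hℓ 0).continuousAt.tendsto
  have hderiv : deriv (f ∘ ℓ) =ᶠ[𝓝 0] fun t ↦ fderiv ℝ f (ℓ t) e := by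
    filter_upwards [hℓx.eventually (hf.eventually (by simp))] with t ht
    exact ((ht.differentiableAt two_ne_zero).hasFDerivAt.comp_hasDerivAt t (hℓ t)).deriv
  have hsecond : HasDerivAt (fun t ↦ fderiv ℝ f (ℓ t) e) (fderiv ℝ (fderiv ℝ f) x e e) 0 := by
    have hf' : DifferentiableAt ℝ (fderiv ℝ f) x :=
      (hf.fderiv_right (m := 1) le_rfl).differentiableAt one_ne_zero
    exact (ContinuousLinearMap.apply ℝ ℝ e).hasFDerivAt.comp_hasDerivAt 0
      (hf'.hasFDerivAt.comp_hasDerivAt_of_eq 0 (hℓ 0) hℓ0.symm)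
  calc fderiv ℝ (fderiv ℝ f) x e e = deriv (deriv (f ∘ ℓ)) 0 := by
        rw [hderiv.deriv_eq, hsecond.deriv]
    _ ≤ 0 := ((hℓ0 ▸ h).comp_continuous (hℓ 0).continuousAt).deriv_deriv_nonpos
        (hf.continuousAt.comp_of_eq (hℓ 0).continuousAt hℓ0)

theorem iteratedDeriv_two_exp_neg :
    iteratedDeriv 2 (fun s : ℝ ↦ Real.exp (-s)) = fun s ↦ Real.exp (-s) := by
  have hd : ∀ s : ℝ, HasDerivAt (fun s ↦ Real.exp (-s)) (-Real.exp (-s)) s := fun s ↦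
    ((Real.hasDerivAt_exp (-s)).comp s (hasDerivAt_neg s)).congr_deriv (by ring)
  have h1 : deriv (fun s : ℝ ↦ Real.exp (-s)) = fun s ↦ -Real.exp (-s) :=
    funext fun s ↦ (hd s).deriv
  have h2 : deriv (fun s : ℝ ↦ -Real.exp (-s)) = fun s ↦ Real.exp (-s) :=
    funext fun s ↦ ((hd s).neg.congr_deriv (neg_neg _)).deriv
  rw [iteratedDeriv_succ, iteratedDeriv_one, h1, h2]

theorem iteratedDeriv_two_cosh : iteratedDeriv 2 Real.cosh = Real.cosh := by
  simp [iteratedDeriv_succ, Real.deriv_cosh, Real.deriv_sinh]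

theorem sq_div_four_le_cosh (t : ℝ) : t ^ 2 / 4 ≤ Real.cosh t := by
  have := Real.quadratic_le_exp_of_nonneg (abs_nonneg t)
  rw [← Real.cosh_abs, Real.cosh_eq]
  nlinarith [Real.exp_pos (-|t|), sq_abs t, abs_nonneg t]

section InnerProductSpace

variable {E : Type*} [NormedAddCommGroup E] [InnerProductSpace ℝ E] [FiniteDimensional ℝ E]

theorem IsLocalMax.laplacian_nonpos {f : E → ℝ} {x : E} (h : IsLocalMax f x)
    (hf : ContDiffAt ℝ 2 f x) : Δ f x ≤ 0 := by
  rw [laplacian_eq_iteratedFDeriv_stdOrthonormalBasis]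
  exact Finset.sum_nonpos fun i _ ↦ by
    simpa [iteratedFDeriv_two_apply] using h.fderiv_fderiv_apply_self_nonpos hf _

theorem laplacian_fun_sum {ι : Type*} {s : Finset ι} {f : ι → E → ℝ} {x : E}
    (hf : ∀ i ∈ s, ContDiffAt ℝ 2 (f i) x) :
    Δ (fun y ↦ ∑ i ∈ s, f i y) x = ∑ i ∈ s, Δ (f i) x := by
  simp only [laplacian_eq_iteratedFDeriv_stdOrthonormalBasis, iteratedFDeriv_fun_sum_apply hf,
    sum_apply]
  exact Finset.sum_comm

theorem laplacian_comp_inner {F : ℝ → ℝ} (hF : ContDiff ℝ 2 F) (u x : E) :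
    Δ (fun y ↦ F ⟪u, y⟫) x = ‖u‖ ^ 2 * iteratedDeriv 2 F ⟪u, x⟫ := by
  set b := stdOrthonormalBasis ℝ E
  have hparseval : ∑ i, ⟪u, b i⟫ ^ 2 = ‖u‖ ^ 2 := by
    simpa [sq, real_inner_comm] using b.sum_inner_mul_inner u u
  rw [laplacian_eq_iteratedFDeriv_orthonormalBasis _ b, show (fun y ↦ F ⟪u, y⟫) =
    F ∘ innerSL ℝ u from rfl]
  simp_rw [(innerSL ℝ u).iteratedFDeriv_comp_right hF x le_rfl,
    ContinuousMultilinearMap.compContinuousLinearMap_apply,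
    iteratedFDeriv_apply_eq_iteratedDeriv_mul_prod]
  simp [Fin.prod_univ_two, ← hparseval, Finset.sum_mul, sq]

theorem laplacian_exp_neg_inner (u x : E) :
    Δ (fun y ↦ Real.exp (-⟪u, y⟫)) x = ‖u‖ ^ 2 * Real.exp (-⟪u, x⟫) := by
  rw [laplacian_comp_inner (F := fun s ↦ Real.exp (-s)) (Real.contDiff_exp.comp contDiff_neg),
    iteratedDeriv_two_exp_neg]

theorem laplacian_cosh_inner (u x : E) :
    Δ (fun y ↦ Real.cosh ⟪u, y⟫) x = ‖u‖ ^ 2 * Real.cosh ⟪u, x⟫ := by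
  rw [laplacian_comp_inner Real.contDiff_cosh, iteratedDeriv_two_cosh]

variable (E) in
noncomputable def coshSum (y : E) : ℝ := ∑ i, Real.cosh ⟪stdOrthonormalBasis ℝ E i, y⟫

theorem contDiff_coshSum {n : WithTop ℕ∞} : ContDiff ℝ n (coshSum E) :=
  ContDiff.sum fun _ _ ↦ Real.contDiff_cosh.comp (contDiff_const.inner ℝ contDiff_id)

theorem laplacian_coshSum (x : E) : Δ (coshSum E) x = coshSum E x := by
  unfold coshSum
  rw [laplacian_fun_sum (f := fun i y ↦ Real.cosh ⟪stdOrthonormalBasis ℝ E i, y⟫) fun _ _ ↦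
    (Real.contDiff_cosh.comp (contDiff_const.inner ℝ contDiff_id)).contDiffAt]
  refine Finset.sum_congr rfl fun i _ ↦ ?_
  rw [laplacian_cosh_inner, (stdOrthonormalBasis ℝ E).orthonormal.1 i, one_pow, one_mul]

theorem coshSum_nonneg (y : E) : 0 ≤ coshSum E y :=
  Finset.sum_nonneg fun _ _ ↦ (Real.cosh_pos _).le

theorem sq_norm_div_four_le_coshSum (y : E) : ‖y‖ ^ 2 / 4 ≤ coshSum E y := by
  set b := stdOrthonormalBasis ℝ E
  have hparseval : ∑ i, ⟪b i, y⟫ ^ 2 = ‖y‖ ^ 2 := by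
    simpa [sq, real_inner_comm] using b.sum_inner_mul_inner y y
  rw [← hparseval, Finset.sum_div]
  exact Finset.sum_le_sum fun _ _ ↦ sq_div_four_le_cosh _

theorem tendsto_coshSum_cocompact : Tendsto (coshSum E) (cocompact E) atTop :=
  tendsto_atTop_mono sq_norm_div_four_le_coshSum <|
    ((tendsto_pow_atTop two_ne_zero).comp tendsto_norm_cocompact_atTop).atTop_div_const
      (by norm_num)

noncomputable def expBarrier (u : E) (a ε b : ℝ) (y : E) : ℝ :=
  a * Real.exp (-⟪u, y⟫) + ε * coshSum E y + b

theorem contDiff_expBarrier {n : WithTop ℕ∞} (u : E) (a ε b : ℝ) :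
    ContDiff ℝ n (expBarrier u a ε b) :=
  ((contDiff_const.mul (Real.contDiff_exp.comp (contDiff_const.inner ℝ contDiff_id).neg)).add
    (contDiff_const.mul contDiff_coshSum)).add contDiff_const

theorem laplacian_expBarrier (u : E) (a ε b : ℝ) (x : E) :
    Δ (expBarrier u a ε b) x = a * (‖u‖ ^ 2 * Real.exp (-⟪u, x⟫)) + ε * coshSum E x := by
  set P : E → ℝ := fun y ↦ Real.exp (-⟪u, y⟫)
  have hP : ContDiff ℝ 2 P := Real.contDiff_exp.comp (contDiff_const.inner ℝ contDiff_id).neg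
  have haP : ContDiffAt ℝ 2 (a • P) x := hP.contDiffAt.const_smul a
  have hεΦ : ContDiffAt ℝ 2 (ε • coshSum E) x := contDiff_coshSum.contDiffAt.const_smul ε
  have hsum : ContDiffAt ℝ 2 (a • P + ε • coshSum E) x := haP.add hεΦ
  rw [show expBarrier u a ε b = a • P + ε • coshSum E + fun _ ↦ b from rfl,
    hsum.laplacian_add contDiffAt_const, haP.laplacian_add hεΦ, laplacian_smul _ hP.contDiffAt,
    laplacian_smul _ contDiff_coshSum.contDiffAt, laplacian_exp_neg_inner, laplacian_coshSum,
    laplacian_const, Pi.zero_apply, add_zero, smul_eq_mul, smul_eq_mul]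

theorem laplacian_expBarrier_le {u : E} (hu : ‖u‖ ≤ 1) {a : ℝ} (ha : 0 ≤ a) (ε b : ℝ) (x : E) :
    Δ (expBarrier u a ε b) x ≤ expBarrier u a ε b x - b := by
  have hu2 : ‖u‖ ^ 2 * Real.exp (-⟪u, x⟫) ≤ Real.exp (-⟪u, x⟫) :=
    mul_le_of_le_one_left (Real.exp_pos _).le (pow_le_one₀ (norm_nonneg u) hu)
  rw [laplacian_expBarrier, expBarrier]
  linarith [mul_le_mul_of_nonneg_left hu2 ha]

theorem mul_exp_neg_norm_add_le_expBarrier {u : E} (hu : ‖u‖ ≤ 1) {a ε : ℝ} (ha : 0 ≤ a)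
    (hε : 0 ≤ ε) (b : ℝ) (y : E) :
    a * Real.exp (-‖y‖) + b ≤ expBarrier u a ε b y := by
  have hinner : ⟪u, y⟫ ≤ ‖y‖ :=
    (real_inner_le_norm u y).trans (mul_le_of_le_one_left (norm_nonneg y) hu)
  rw [expBarrier]
  linarith [mul_le_mul_of_nonneg_left (Real.exp_le_exp.2 (neg_le_neg hinner)) ha,
    mul_nonneg hε (coshSum_nonneg y)]

theorem mul_coshSum_add_le_expBarrier (u : E) {a : ℝ} (ha : 0 ≤ a) (ε b : ℝ) (y : E) :
    ε * coshSum E y + b ≤ expBarrier u a ε b y := by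
  rw [expBarrier]
  linarith [mul_nonneg ha (Real.exp_pos (-⟪u, y⟫)).le]

theorem nonpos_of_le_laplacian_of_tendsto_atBot {h : E → ℝ} {R : ℝ}
    (hcont : ContinuousOn h {y | R ≤ ‖y‖}) (hC2 : ContDiffOn ℝ 2 h {y | R < ‖y‖})
    (hbdry : ∀ y, ‖y‖ = R → h y ≤ 0) (hlap : ∀ y, R < ‖y‖ → h y ≤ Δ h y)
    (hinf : Tendsto h (cocompact E ⊓ 𝓟 {y | R ≤ ‖y‖}) atBot) {x : E} (hx : R ≤ ‖x‖) :
    h x ≤ 0 := by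
  obtain ⟨z, hz, hmax⟩ := hcont.exists_isMaxOn' (isClosed_le continuous_const continuous_norm) hx
    (hinf.eventually_le_atBot (h x))
  refine (hmax hx).trans ?_
  rcases (show R ≤ ‖z‖ from hz).eq_or_lt with hz | hz
  · exact hbdry z hz.symm
  have hopen : IsOpen {y : E | R < ‖y‖} := isOpen_lt continuous_const continuous_norm
  have hlocal : IsLocalMax h z :=
    Filter.mem_of_superset (hopen.mem_nhds hz) fun y (hy : R < ‖y‖) ↦ hmax hy.le
  exact (hlap z hz).trans (hlocal.laplacian_nonpos (hC2.contDiffAt (hopen.mem_nhds hz)))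

theorem le_expBarrier_of_le_laplacian {v : E → ℝ} {R a b M ε : ℝ} {u : E} (hu : ‖u‖ ≤ 1)
    (ha : 0 ≤ a) (hε : 0 < ε)
    (hcont : ContinuousOn v {y | R ≤ ‖y‖}) (hC2 : ContDiffOn ℝ 2 v {y | R < ‖y‖})
    (hM : ∀ y, R ≤ ‖y‖ → v y ≤ M) (hbdry : ∀ y, ‖y‖ = R → v y ≤ a * Real.exp (-R) + b)
    (hlap : ∀ y, R < ‖y‖ → v y - b ≤ Δ v y) {x : E} (hx : R ≤ ‖x‖) :
    v x ≤ expBarrier u a ε b x := by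
  set W := expBarrier u a ε b
  have hW : ContDiff ℝ 2 W := contDiff_expBarrier u a ε b
  suffices (v - W) x ≤ 0 by simpa [sub_nonpos] using this
  refine nonpos_of_le_laplacian_of_tendsto_atBot (hcont.sub hW.continuous.continuousOn)
    (hC2.sub hW.contDiffOn) (fun y hy ↦ ?_) (fun y hy ↦ ?_) ?_ hx
  · have := mul_exp_neg_norm_add_le_expBarrier hu ha hε.le b y
    rw [hy] at this
    simp only [Pi.sub_apply]
    linarith [hbdry y hy]
  · have hopen : IsOpen {y : E | R < ‖y‖} := isOpen_lt continuous_const continuous_norm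
    rw [(hC2.contDiffAt (hopen.mem_nhds hy)).laplacian_sub hW.contDiffAt]
    simp only [Pi.sub_apply]
    linarith [hlap y hy, laplacian_expBarrier_le hu ha ε b y]
  · have hlow : Tendsto (fun y ↦ M - b - ε * coshSum E y) (cocompact E) atBot :=
      tendsto_atBot_add_const_left _ _
        (tendsto_neg_atTop_atBot.comp (tendsto_coshSum_cocompact.const_mul_atTop hε))
    refine tendsto_atBot_mono' _ ?_ (hlow.mono_left inf_le_left)
    filter_upwards [inf_le_right (a := cocompact E) (mem_principal_self _)] with y hy
    simp only [Pi.sub_apply]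
    linarith [hM y hy, mul_coshSum_add_le_expBarrier u ha ε b y]

theorem le_mul_exp_neg_norm_add_of_le_laplacian {v : E → ℝ} {R a b M : ℝ} (ha : 0 ≤ a)
    (hcont : ContinuousOn v {y | R ≤ ‖y‖}) (hC2 : ContDiffOn ℝ 2 v {y | R < ‖y‖})
    (hM : ∀ y, R ≤ ‖y‖ → v y ≤ M) (hbdry : ∀ y, ‖y‖ = R → v y ≤ a * Real.exp (-R) + b)
    (hlap : ∀ y, R < ‖y‖ → v y - b ≤ Δ v y) {x : E} (hx : R ≤ ‖x‖) :
    v x ≤ a * Real.exp (-‖x‖) + b := by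
  -- For `x = 0` this gives `u = 0`, which still has both properties below.
  set u : E := ‖x‖⁻¹ • x
  have hu : ‖u‖ ≤ 1 := by
    rw [norm_smul, norm_inv, norm_norm]
    exact inv_mul_le_one
  have hux : ⟪u, x⟫ = ‖x‖ := by
    rw [real_inner_smul_left, real_inner_self_eq_norm_sq]
    rcases eq_or_ne ‖x‖ 0 with h0 | h0
    · simp [h0]
    · field_simp
  have hε : ∀ ε > 0, v x ≤ a * Real.exp (-‖x‖) + ε * coshSum E x + b := fun ε hε ↦ by
    simpa [expBarrier, hux] using
      le_expBarrier_of_le_laplacian hu ha hε hcont hC2 hM hbdry hlap hx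
  have hlim : Tendsto (fun ε ↦ a * Real.exp (-‖x‖) + ε * coshSum E x + b) (𝓝[>] 0)
      (𝓝 (a * Real.exp (-‖x‖) + b)) := by
    have hcont : Continuous fun ε : ℝ ↦ a * Real.exp (-‖x‖) + ε * coshSum E x + b := by
      fun_prop
    simpa using (hcont.tendsto 0).mono_left nhdsWithin_le_nhds
  exact ge_of_tendsto hlim (eventually_nhdsWithin_of_forall hε)

end InnerProductSpace

theorem lap2_eq_laplacian : lap2 = Δ := by
  ext f x
  simp [lap2, laplacian_eq_iteratedFDeriv_orthonormalBasis f (EuclideanSpace.basisFun (Fin 2) ℝ)]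

theorem stmt_2_general (C₁ R δ : ℝ) (hC₁ : 0 < C₁) (hδ0 : 0 < δ) (hδ : δ ≤ 1 / C₁)
    (v : EuclideanSpace ℝ (Fin 2) → ℝ)
    (hcont : ContinuousOn v {x | R ≤ ‖x‖})
    (hC2 : ContDiffOn ℝ 2 v {x | R < ‖x‖})
    (hb : ∀ x, R ≤ ‖x‖ → |v x| ≤ δ)
    (heq : ∀ x, R < ‖x‖ → |lap2 v x - v x| ≤ C₁ * δ ^ 2) :
    ∀ x, R ≤ ‖x‖ →
      |v x| ≤ δ * (1 - C₁ * δ) * Real.exp (R - ‖x‖) + C₁ * δ ^ 2 := by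
  intro x hx
  have hC₁δ : C₁ * δ ≤ 1 := by rwa [le_div_iff₀ hC₁, mul_comm] at hδ
  set a := δ * (1 - C₁ * δ) * Real.exp R
  have ha : 0 ≤ a := by have := Real.exp_pos R; positivity
  have hbdry : δ = a * Real.exp (-R) + C₁ * δ ^ 2 := by
    rw [mul_assoc, ← Real.exp_add, add_neg_cancel, Real.exp_zero]; ring
  have hcompare : ∀ w : EuclideanSpace ℝ (Fin 2) → ℝ, ContinuousOn w {y | R ≤ ‖y‖} →
      ContDiffOn ℝ 2 w {y | R < ‖y‖} → (∀ y, R ≤ ‖y‖ → w y ≤ δ) →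
      (∀ y, R < ‖y‖ → w y - C₁ * δ ^ 2 ≤ Δ w y) → w x ≤ a * Real.exp (-‖x‖) + C₁ * δ ^ 2 :=
    fun w hw hw2 hwδ hlap ↦ le_mul_exp_neg_norm_add_of_le_laplacian ha hw hw2 hwδ
      (fun y hy ↦ hbdry ▸ hwδ y hy.ge) hlap hx
  rw [lap2_eq_laplacian] at heq
  have upper := hcompare v hcont hC2 (fun y hy ↦ (abs_le.1 (hb y hy)).2)
    (fun y hy ↦ by linarith [(abs_le.1 (heq y hy)).1])
  have lower := hcompare (-v) hcont.neg hC2.neg (fun y hy ↦ neg_le.1 (abs_le.1 (hb y hy)).1)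
    (fun y hy ↦ by
      rw [laplacian_neg, Pi.neg_apply, Pi.neg_apply]
      linarith [(abs_le.1 (heq y hy)).2])
  have hexp : δ * (1 - C₁ * δ) * Real.exp (R - ‖x‖) = a * Real.exp (-‖x‖) := by
    rw [Real.exp_sub, Real.exp_neg]; ring
  rw [Pi.neg_apply] at lower
  rw [hexp, abs_le]
  exact ⟨by linarith, upper⟩

/-- Barrier estimate: if `|v| ≤ δ` on `{|x| ≥ R}` and `|Δv − v| ≤ C₁δ²` there, then
`|v(x)| ≤ δ(1 − C₁δ) e^{R−|x|} + C₁δ²`. -/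
theorem stmt_2 (C₁ R δ : ℝ) (hC₁ : 0 < C₁) (hR : 1 ≤ R) (hδ0 : 0 < δ) (hδ : δ ≤ 1 / C₁)
    (v : EuclideanSpace ℝ (Fin 2) → ℝ)
    (hcont : ContinuousOn v {x | R ≤ ‖x‖})
    (hC2 : ContDiffOn ℝ 2 v {x | R < ‖x‖})
    (hb : ∀ x, R ≤ ‖x‖ → |v x| ≤ δ)
    (heq : ∀ x, R < ‖x‖ → |lap2 v x - v x| ≤ C₁ * δ ^ 2) :
    ∀ x, R ≤ ‖x‖ →
      |v x| ≤ δ * (1 - C₁ * δ) * Real.exp (R - ‖x‖) + C₁ * δ ^ 2 :=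
  stmt_2_general C₁ R δ hC₁ hδ0 hδ v hcont hC2 hb heq
end

section
/- Let n ≥ 1 and let V : ℝⁿ → ℝ be smooth and bounded. Suppose u₀ : ℝⁿ → ℝ is twice continuously differentiable, strictly positive, square-integrable on ℝⁿ, and satisfies Δu₀ = V·u₀ on ℝⁿ. If v : ℝⁿ → ℝ is twice continuously differentiable, strictly positive, and satisfies Δv = V·v on ℝⁿ, then there exists a constant c > 0 such that v = c·u₀. -/
open MeasureTheory Filter
open Set

/-- The Euclidean Laplacian on `ℝⁿ`: the sum of the pure second partial derivatives. -/
noncomputable def lapN (n : ℕ) (f : EuclideanSpace ℝ (Fin n) → ℝ)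
    (x : EuclideanSpace ℝ (Fin n)) : ℝ :=
  ∑ i : Fin n, iteratedFDeriv ℝ 2 f x ![EuclideanSpace.single i 1, EuclideanSpace.single i 1]


lemma div_int_zero_pi {m : ℕ} (X : Fin (m+1) → (Fin (m+1) → ℝ) → ℝ)
    (hX : ∀ i, ContDiff ℝ 1 (X i)) (hsupp : ∀ i, HasCompactSupport (X i)) :
    ∫ x : Fin (m+1) → ℝ, ∑ i, fderiv ℝ (X i) x (Pi.single i 1) = 0 := by
  obtain ⟨R₀, hR₀⟩ : ∃ R : ℝ, ∀ i, tsupport (X i) ⊆ Metric.closedBall 0 R := by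
    have hc : IsCompact (⋃ i, tsupport (X i)) := isCompact_iUnion fun i => hsupp i
    obtain ⟨R, hR⟩ := hc.isBounded.subset_closedBall 0
    exact ⟨R, fun i => (subset_iUnion _ i).trans hR⟩
  set R : ℝ := max R₀ 0 with hRdef
  have hR : ∀ i, tsupport (X i) ⊆ Metric.closedBall 0 R :=
    fun i => (hR₀ i).trans (Metric.closedBall_subset_closedBall (le_max_left _ _))
  have hRnn : 0 ≤ R := le_max_right _ _
  set a : Fin (m+1) → ℝ := fun _ => -(R+1) with ha
  set b : Fin (m+1) → ℝ := fun _ => (R+1) with hb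
  have hle : a ≤ b := fun i => by simp only [ha, hb]; linarith
  -- points outside closedBall 0 R kill X i and its derivative
  have hout : ∀ (i j : Fin (m+1)) (y : Fin (m+1) → ℝ), R < |y j| → X i y = 0 ∧ fderiv ℝ (X i) y = 0 := by
    intro i j y hy
    have hny : y ∉ Metric.closedBall (0 : Fin (m+1) → ℝ) R := by
      simp only [Metric.mem_closedBall, dist_zero_right]
      intro h
      exact absurd ((norm_le_pi_norm y j).trans h) (by simpa using hy.not_ge)
    have hnt : y ∉ tsupport (X i) := fun h => hny (hR i h)
    exact ⟨image_eq_zero_of_notMem_tsupport hnt,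
      Function.notMem_support.mp fun h => hnt (support_fderiv_subset ℝ h)⟩
  have key := MeasureTheory.integral_divergence_of_hasFDerivAt_off_countable' a b hle
    X (fun i x => fderiv ℝ (X i) x) ∅ Set.countable_empty
    (fun i => (hX i).continuous.continuousOn)
    (fun x _ i => ((hX i).differentiable (by norm_num)).differentiableAt.hasFDerivAt)
    (by
      apply Continuous.integrableOn_Icc
      exact continuous_finset_sum _ fun i _ =>
        ((hX i).continuous_fderiv (by norm_num)).clm_apply continuous_const)
  rw [setIntegral_eq_integral_of_forall_compl_eq_zero (f := fun x => ∑ i, fderiv ℝ (X i) x (Pi.single i 1))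
      (fun x hx => ?_)] at key
  · rw [key]
    apply Finset.sum_eq_zero
    intro i _
    have h1 : (∫ x in Icc (a ∘ i.succAbove) (b ∘ i.succAbove), X i (i.insertNth (b i) x)) = 0 := by
      rw [setIntegral_eq_zero_of_forall_eq_zero]
      intro x _
      refine (hout i i _ ?_).1
      simp only [Fin.insertNth_apply_same, hb]
      rw [abs_of_nonneg (by linarith)]; linarith
    have h2 : (∫ x in Icc (a ∘ i.succAbove) (b ∘ i.succAbove), X i (i.insertNth (a i) x)) = 0 := by
      rw [setIntegral_eq_zero_of_forall_eq_zero]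
      intro x _
      refine (hout i i _ ?_).1
      simp only [Fin.insertNth_apply_same, ha]
      rw [abs_of_nonpos (by linarith)]; linarith
    rw [h1, h2, sub_self]
  · -- x outside Icc a b
    apply Finset.sum_eq_zero
    intro i _
    have : ∃ j, R < |x j| := by
      simp only [Set.mem_Icc, not_and_or, not_forall, not_le, Pi.le_def] at hx
      rcases hx with ⟨j, hj⟩ | ⟨j, hj⟩
      · exact ⟨j, by simp only [ha] at hj; rw [abs_of_nonpos (by linarith)]; linarith⟩
      · exact ⟨j, by simp only [hb] at hj; rw [abs_of_nonneg (by linarith)]; linarith⟩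
    obtain ⟨j, hj⟩ := this
    rw [(hout i j x hj).2]
    rfl



lemma div_int_zero_euc {n : ℕ} (hn : 1 ≤ n) (X : Fin n → EuclideanSpace ℝ (Fin n) → ℝ)
    (hX : ∀ i, ContDiff ℝ 1 (X i)) (hsupp : ∀ i, HasCompactSupport (X i)) :
    ∫ x : EuclideanSpace ℝ (Fin n), ∑ i, fderiv ℝ (X i) x (EuclideanSpace.single i 1) = 0 := by
  obtain ⟨m, rfl⟩ : ∃ m, n = m + 1 := ⟨n - 1, (Nat.succ_pred_eq_of_pos hn).symm⟩
  set eL := EuclideanSpace.equiv (Fin (m+1)) ℝ with heL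
  set Y : Fin (m+1) → (Fin (m+1) → ℝ) → ℝ := fun i y => X i (eL.symm y) with hYdef
  have hY : ∀ i, ContDiff ℝ 1 (Y i) := fun i =>
    (hX i).comp (eL.symm : (Fin (m+1) → ℝ) →L[ℝ] EuclideanSpace ℝ (Fin (m+1))).contDiff
  have hYsupp : ∀ i, HasCompactSupport (Y i) := fun i =>
    (hsupp i).comp_homeomorph eL.symm.toHomeomorph
  have hder : ∀ i y, fderiv ℝ (Y i) y (Pi.single i 1)
      = fderiv ℝ (X i) (eL.symm y) (EuclideanSpace.single i 1) := by
    intro i y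
    have h1 : HasFDerivAt (Y i)
        (((fderiv ℝ (X i) (eL.symm y))).comp (eL.symm : _ →L[ℝ] _)) y :=
      (((hX i).differentiable (by norm_num) _).hasFDerivAt).comp y (eL.symm.hasFDerivAt)
    rw [h1.fderiv]
    have : eL.symm (Pi.single i 1) = EuclideanSpace.single i 1 := rfl
    simp [ContinuousLinearMap.comp_apply, this]
  have hMP : MeasurePreserving (MeasurableEquiv.toLp 2 (Fin (m+1) → ℝ)) volume volume :=
    (EuclideanSpace.volume_preserving_symm_measurableEquiv_toLp (Fin (m+1))).symm
  have hcoe : ∀ y : Fin (m+1) → ℝ,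
      ((MeasurableEquiv.toLp 2 (Fin (m+1) → ℝ)) y : EuclideanSpace ℝ (Fin (m+1)))
        = eL.symm y := fun y => rfl
  have key : (0:ℝ) = _ := calc (0:ℝ) = ∫ y : Fin (m+1) → ℝ, ∑ i, fderiv ℝ (Y i) y (Pi.single i 1) :=
        (div_int_zero_pi Y hY hYsupp).symm
    _ = ∫ y : Fin (m+1) → ℝ,
          (fun x => ∑ i, fderiv ℝ (X i) x (EuclideanSpace.single i 1))
            ((MeasurableEquiv.toLp 2 (Fin (m+1) → ℝ)) y) := by
        congr 1; funext y; simp only [hder, hcoe]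
    _ = ∫ x : EuclideanSpace ℝ (Fin (m+1)), ∑ i, fderiv ℝ (X i) x
          (EuclideanSpace.single i 1) := (hMP.integral_comp'
          (fun x => ∑ i, fderiv ℝ (X i) x (EuclideanSpace.single i 1)))
  exact key.symm


variable {n : ℕ}

noncomputable abbrev sg (n : ℕ) (i : Fin n) : EuclideanSpace ℝ (Fin n) :=
  EuclideanSpace.single i (1:ℝ)

/-- `ContDiff 1` of a directional derivative of a `C²` function. -/
lemma cd_deriv (f : EuclideanSpace ℝ (Fin n) → ℝ) (hf : ContDiff ℝ 2 f)
    (w : EuclideanSpace ℝ (Fin n)) :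
    ContDiff ℝ 1 (fun x => fderiv ℝ f x w) := by
  have h1 : ContDiff ℝ 1 (fderiv ℝ f) := hf.fderiv_right (by norm_num)
  exact (ContinuousLinearMap.apply ℝ ℝ w).contDiff.comp h1

lemma d_mul (f g : EuclideanSpace ℝ (Fin n) → ℝ) {x} (hf : DifferentiableAt ℝ f x)
    (hg : DifferentiableAt ℝ g x) (w) :
    fderiv ℝ (fun y => f y * g y) x w
      = fderiv ℝ f x w * g x + f x * fderiv ℝ g x w := by
  rw [fderiv_fun_mul hf hg]
  simp [ContinuousLinearMap.add_apply, ContinuousLinearMap.smul_apply]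
  ring

lemma d_inv (g : EuclideanSpace ℝ (Fin n) → ℝ) {x}
    (hg : DifferentiableAt ℝ g x) (hgx : g x ≠ 0) (w) :
    fderiv ℝ (fun y => (g y)⁻¹) x w = -(fderiv ℝ g x w) / (g x)^2 := by
  have h := (hasDerivAt_inv hgx).comp_hasFDerivAt x hg.hasFDerivAt
  have h' : HasFDerivAt (fun y => (g y)⁻¹) (-(g x ^ 2)⁻¹ • fderiv ℝ g x) x := h
  rw [h'.fderiv]
  simp [ContinuousLinearMap.smul_apply]
  field_simp

lemma d_div (f g : EuclideanSpace ℝ (Fin n) → ℝ) {x} (hf : DifferentiableAt ℝ f x)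
    (hg : DifferentiableAt ℝ g x) (hgx : g x ≠ 0) (w) :
    fderiv ℝ (fun y => f y / g y) x w
      = (fderiv ℝ f x w * g x - f x * fderiv ℝ g x w) / (g x)^2 := by
  have hginv : DifferentiableAt ℝ (fun y => (g y)⁻¹) x :=
    ((differentiableAt_inv hgx).comp x hg)
  have : (fun y => f y / g y) = fun y => f y * (g y)⁻¹ := by
    funext y; rw [div_eq_mul_inv]
  rw [this, d_mul f _ hf hginv w, d_inv g hg hgx w]
  field_simp
  ring

lemma d_sub (f g : EuclideanSpace ℝ (Fin n) → ℝ) {x} (hf : DifferentiableAt ℝ f x)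
    (hg : DifferentiableAt ℝ g x) (w) :
    fderiv ℝ (fun y => f y - g y) x w = fderiv ℝ f x w - fderiv ℝ g x w := by
  rw [fderiv_fun_sub hf hg]; rfl


lemma lap_eq (f : EuclideanSpace ℝ (Fin n) → ℝ) (hf : ContDiff ℝ 2 f) (x) :
    lapN n f x = ∑ i, fderiv ℝ (fun y => fderiv ℝ f y (sg n i)) x (sg n i) := by
  unfold lapN
  refine Finset.sum_congr rfl fun i _ => ?_
  rw [iteratedFDeriv_two_apply]
  have hd : DifferentiableAt ℝ (fderiv ℝ f) x :=
    ((hf.fderiv_right (m := 1) (by norm_num)).differentiable (by norm_num)).differentiableAt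
  rw [fderiv_clm_apply hd (differentiableAt_const _)]
  simp [sg]


noncomputable def bump (n : ℕ) : ContDiffBump (0 : EuclideanSpace ℝ (Fin n)) :=
  ⟨1, 2, one_pos, one_lt_two⟩

noncomputable def cut (n : ℕ) (R : ℝ) (x : EuclideanSpace ℝ (Fin n)) : ℝ :=
  bump n (R⁻¹ • x)

variable {n : ℕ} {R : ℝ}

lemma cut_smooth (hR : 0 < R) : ContDiff ℝ 2 (cut n R) :=
  ((bump n).contDiff (n := 2)).comp (contDiff_const_smul R⁻¹)

lemma cut_nonneg (x) : 0 ≤ cut n R x := (bump n).nonneg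

lemma cut_le_one (x) : cut n R x ≤ 1 := (bump n).le_one

lemma cut_one (hR : 0 < R) {x : EuclideanSpace ℝ (Fin n)} (hx : ‖x‖ ≤ R) : cut n R x = 1 := by
  apply (bump n).one_of_mem_closedBall
  simp only [Metric.mem_closedBall, dist_zero_right, norm_smul, norm_inv, Real.norm_eq_abs,
    abs_of_pos hR]
  rw [inv_mul_le_iff₀ hR]
  simpa [bump] using hx

lemma cut_zero (hR : 0 < R) {x : EuclideanSpace ℝ (Fin n)} (hx : 2*R ≤ ‖x‖) : cut n R x = 0 := by
  apply (bump n).zero_of_le_dist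
  simp only [dist_zero_right, norm_smul, norm_inv, Real.norm_eq_abs, abs_of_pos hR]
  show (2:ℝ) ≤ R⁻¹ * ‖x‖
  rw [← mul_le_mul_iff_right₀ hR]
  have : R * (R⁻¹ * ‖x‖) = ‖x‖ := by field_simp
  rw [this]; linarith

lemma cut_supp (hR : 0 < R) : HasCompactSupport (cut n R) := by
  apply HasCompactSupport.intro (K := Metric.closedBall 0 (2*R)) (isCompact_closedBall _ _)
  intro x hx
  apply cut_zero hR
  simp only [Metric.mem_closedBall, dist_zero_right, not_le] at hx
  linarith

lemma cut_deriv (hR : 0 < R) (x : EuclideanSpace ℝ (Fin n)) (w) :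
    fderiv ℝ (cut n R) x w = R⁻¹ * fderiv ℝ (bump n) (R⁻¹ • x) w := by
  have hψ : HasFDerivAt (bump n) (fderiv ℝ (bump n) (R⁻¹ • x)) (R⁻¹ • x) :=
    ((bump n).contDiff (n := 1)).differentiable (by norm_num) |>.differentiableAt.hasFDerivAt
  have hlin : HasFDerivAt (fun y : EuclideanSpace ℝ (Fin n) => R⁻¹ • y)
      (R⁻¹ • ContinuousLinearMap.id ℝ (EuclideanSpace ℝ (Fin n))) x :=
    ((ContinuousLinearMap.id ℝ _).hasFDerivAt).const_smul R⁻¹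
  have h := hψ.comp x hlin
  have h' : HasFDerivAt (cut n R)
      ((fderiv ℝ (bump n) (R⁻¹ • x)).comp
        (R⁻¹ • ContinuousLinearMap.id ℝ (EuclideanSpace ℝ (Fin n)))) x := h
  rw [h'.fderiv]
  simp only [ContinuousLinearMap.comp_apply, ContinuousLinearMap.smul_apply,
    ContinuousLinearMap.id_apply, _root_.map_smul, smul_eq_mul]

section main
variable {n : ℕ} (V u₀ v χ : EuclideanSpace ℝ (Fin n) → ℝ)

noncomputable def Gf (i : Fin n) (x : EuclideanSpace ℝ (Fin n)) : ℝ :=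
  fderiv ℝ v x (sg n i) / v x - fderiv ℝ u₀ x (sg n i) / u₀ x

noncomputable def Xf (i : Fin n) (x : EuclideanSpace ℝ (Fin n)) : ℝ :=
  (χ x)^2 * (u₀ x)^2 * Gf u₀ v i x

variable (hu₀ : ContDiff ℝ 2 u₀) (hu₀pos : ∀ x, 0 < u₀ x)
  (hv : ContDiff ℝ 2 v) (hvpos : ∀ x, 0 < v x) (hχ : ContDiff ℝ 2 χ)

include hu₀ hu₀pos hv hvpos in
lemma Gf_contDiff (i : Fin n) : ContDiff ℝ 1 (Gf u₀ v i) := by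
  apply ContDiff.sub
  · exact (cd_deriv v hv _).div (hv.of_le (by norm_num)) fun x => (hvpos x).ne'
  · exact (cd_deriv u₀ hu₀ _).div (hu₀.of_le (by norm_num)) fun x => (hu₀pos x).ne'

include hu₀ hu₀pos hv hvpos hχ in
lemma Xf_contDiff (i : Fin n) : ContDiff ℝ 1 (Xf u₀ v χ i) := by
  apply ContDiff.mul
  · exact ((hχ.of_le (by norm_num)).pow 2).mul ((hu₀.of_le (by norm_num)).pow 2)
  · exact Gf_contDiff u₀ v hu₀ hu₀pos hv hvpos i

lemma Xf_supp (hχs : HasCompactSupport χ) (i : Fin n) : HasCompactSupport (Xf u₀ v χ i) := by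
  apply HasCompactSupport.intro hχs
  intro x hx
  have : χ x = 0 := image_eq_zero_of_notMem_tsupport hx
  simp [Xf, this]

include hu₀ hu₀pos hv hvpos hχ in
lemma sum_div_Xf
    (hu₀eq : ∀ x, lapN n u₀ x = V x * u₀ x)
    (hveq : ∀ x, lapN n v x = V x * v x) (x) :
    ∑ i, fderiv ℝ (Xf u₀ v χ i) x (sg n i)
      = 2*(χ x)*(u₀ x)^2 * (∑ i, fderiv ℝ χ x (sg n i) * Gf u₀ v i x)
        - (χ x)^2*(u₀ x)^2 * (∑ i, (Gf u₀ v i x)^2) := by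
  have hvd : DifferentiableAt ℝ v x := (hv.differentiable (by norm_num)) x
  have hud : DifferentiableAt ℝ u₀ x := (hu₀.differentiable (by norm_num)) x
  have hχd : DifferentiableAt ℝ χ x := (hχ.differentiable (by norm_num)) x
  have hdv : ∀ i, DifferentiableAt ℝ (fun y => fderiv ℝ v y (sg n i)) x :=
    fun i => ((cd_deriv v hv _).differentiable (by norm_num)) x
  have hdu : ∀ i, DifferentiableAt ℝ (fun y => fderiv ℝ u₀ y (sg n i)) x :=
    fun i => ((cd_deriv u₀ hu₀ _).differentiable (by norm_num)) x
  have hGd : ∀ i, DifferentiableAt ℝ (Gf u₀ v i) x :=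
    fun i => ((Gf_contDiff u₀ v hu₀ hu₀pos hv hvpos i).differentiable (by norm_num)) x
  have hune : u₀ x ≠ 0 := (hu₀pos x).ne'
  have hvne : v x ≠ 0 := (hvpos x).ne'
  have hFd : DifferentiableAt ℝ (fun y => χ y * χ y * (u₀ y * u₀ y)) x :=
    (hχd.mul hχd).mul (hud.mul hud)
  have hstep : ∀ i, fderiv ℝ (Xf u₀ v χ i) x (sg n i)
      = ((χ x)^2*(u₀ x)^2/(v x)) * fderiv ℝ (fun y => fderiv ℝ v y (sg n i)) x (sg n i)
        - ((χ x)^2*(u₀ x)) * fderiv ℝ (fun y => fderiv ℝ u₀ y (sg n i)) x (sg n i)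
        + (2*(χ x)*(u₀ x)^2 * (fderiv ℝ χ x (sg n i) * Gf u₀ v i x)
           - (χ x)^2*(u₀ x)^2 * (Gf u₀ v i x)^2) := by
    intro i
    have hXf : Xf u₀ v χ i = fun y => (χ y * χ y * (u₀ y * u₀ y)) * Gf u₀ v i y := by
      funext y; simp only [Xf]; ring
    rw [hXf, d_mul (fun y => χ y * χ y * (u₀ y * u₀ y)) (Gf u₀ v i) hFd (hGd i),
      d_mul (fun y => χ y * χ y) (fun y => u₀ y * u₀ y) (hχd.mul hχd) (hud.mul hud),
      d_mul χ χ hχd hχd, d_mul u₀ u₀ hud hud]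
    have hGeq : Gf u₀ v i
        = fun y => (fun y => fderiv ℝ v y (sg n i) / v y) y
            - (fun y => fderiv ℝ u₀ y (sg n i) / u₀ y) y := rfl
    have hq1 : DifferentiableAt ℝ (fun y => fderiv ℝ v y (sg n i) / v y) x :=
      (((cd_deriv v hv _).div (hv.of_le (by norm_num))
        fun z => (hvpos z).ne').differentiable (by norm_num)) x
    have hq2 : DifferentiableAt ℝ (fun y => fderiv ℝ u₀ y (sg n i) / u₀ y) x :=
      (((cd_deriv u₀ hu₀ _).div (hu₀.of_le (by norm_num))
        fun z => (hu₀pos z).ne').differentiable (by norm_num)) x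
    rw [hGeq, d_sub _ _ hq1 hq2,
      d_div _ _ (hdv i) hvd hvne, d_div _ _ (hdu i) hud hune]
    beta_reduce
    field_simp
    ring
  have hc : ∑ i, fderiv ℝ (fun y => fderiv ℝ v y (sg n i)) x (sg n i) = V x * v x :=
    (lap_eq v hv x).symm.trans (hveq x)
  have he : ∑ i, fderiv ℝ (fun y => fderiv ℝ u₀ y (sg n i)) x (sg n i) = V x * u₀ x :=
    (lap_eq u₀ hu₀ x).symm.trans (hu₀eq x)
  calc ∑ i, fderiv ℝ (Xf u₀ v χ i) x (sg n i)
      = ∑ i, (((χ x)^2*(u₀ x)^2/(v x)) * fderiv ℝ (fun y => fderiv ℝ v y (sg n i)) x (sg n i)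
        - ((χ x)^2*(u₀ x)) * fderiv ℝ (fun y => fderiv ℝ u₀ y (sg n i)) x (sg n i)
        + (2*(χ x)*(u₀ x)^2 * (fderiv ℝ χ x (sg n i) * Gf u₀ v i x)
           - (χ x)^2*(u₀ x)^2 * (Gf u₀ v i x)^2)) :=
        Finset.sum_congr rfl fun i _ => hstep i
    _ = ((χ x)^2*(u₀ x)^2/(v x)) * (∑ i, fderiv ℝ (fun y => fderiv ℝ v y (sg n i)) x (sg n i))
        - ((χ x)^2*(u₀ x)) * (∑ i, fderiv ℝ (fun y => fderiv ℝ u₀ y (sg n i)) x (sg n i))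
        + (2*(χ x)*(u₀ x)^2 * (∑ i, fderiv ℝ χ x (sg n i) * Gf u₀ v i x)
           - (χ x)^2*(u₀ x)^2 * (∑ i, (Gf u₀ v i x)^2)) := by
        rw [Finset.sum_add_distrib, Finset.sum_sub_distrib, Finset.sum_sub_distrib,
          Finset.mul_sum, Finset.mul_sum, Finset.mul_sum, Finset.mul_sum]
    _ = 2*(χ x)*(u₀ x)^2 * (∑ i, fderiv ℝ χ x (sg n i) * Gf u₀ v i x)
        - (χ x)^2*(u₀ x)^2 * (∑ i, (Gf u₀ v i x)^2) := by
        rw [hc, he]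
        field_simp
        ring
end main

/-- Murata–Agmon lemma, complete boundaryless Euclidean case: if `−Δ + V` admits a strictly
positive `L²` solution `u₀` of `Δu₀ = V·u₀` on `ℝⁿ`, then every strictly positive solution
of the same equation is a positive constant multiple of `u₀`. -/
theorem stmt_7 (n : ℕ) (hn : 1 ≤ n)
    (V : EuclideanSpace ℝ (Fin n) → ℝ) (hV : ContDiff ℝ (⊤ : ℕ∞) V)
    (hVbdd : ∃ M : ℝ, ∀ x, |V x| ≤ M)
    (u₀ : EuclideanSpace ℝ (Fin n) → ℝ) (hu₀ : ContDiff ℝ 2 u₀)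
    (hu₀pos : ∀ x, 0 < u₀ x)
    (hu₀L2 : Integrable (fun x => (u₀ x) ^ 2))
    (hu₀eq : ∀ x, lapN n u₀ x = V x * u₀ x)
    (v : EuclideanSpace ℝ (Fin n) → ℝ) (hv : ContDiff ℝ 2 v)
    (hvpos : ∀ x, 0 < v x)
    (hveq : ∀ x, lapN n v x = V x * v x) :
    ∃ c : ℝ, 0 < c ∧ v = fun x => c * u₀ x := by
  classical
  -- the bound on the derivative of the bump function
  obtain ⟨K₀, hK₀⟩ : ∃ C, ∀ y, ‖fderiv ℝ (bump n) y‖ ≤ C :=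
    (((bump n).contDiff (n := 2)).continuous_fderiv (by norm_num)).bounded_above_of_compact_support
      ((bump n).hasCompactSupport.fderiv (𝕜 := ℝ))
  set K : ℝ := max K₀ 0 with hKdef
  have hK : ∀ y, ‖fderiv ℝ (bump n) y‖ ≤ K := fun y => (hK₀ y).trans (le_max_left _ _)
  have hKnn : 0 ≤ K := le_max_right _ _
  set I : ℝ := ∫ x, (u₀ x)^2 with hIdef
  have hInn : 0 ≤ I := integral_nonneg fun x => sq_nonneg _
  set G : Fin n → EuclideanSpace ℝ (Fin n) → ℝ := Gf u₀ v with hGdef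
  have hGcont : ∀ i, Continuous (G i) :=
    fun i => (Gf_contDiff u₀ v hu₀ hu₀pos hv hvpos i).continuous
  set f : EuclideanSpace ℝ (Fin n) → ℝ := fun x => (u₀ x)^2 * ∑ i, (G i x)^2 with hfdef
  have hfcont : Continuous f := by
    apply Continuous.mul ((hu₀.continuous).pow 2)
    exact continuous_finset_sum _ fun i _ => (hGcont i).pow 2
  have hfnn : ∀ x, 0 ≤ f x := fun x =>
    mul_nonneg (sq_nonneg _) (Finset.sum_nonneg fun i _ => sq_nonneg _)
  -- the key integral bound for each R
  have hkey : ∀ R : ℝ, 0 < R → ∀ r : ℝ, 0 < r → r ≤ R →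
      ∫ x in Metric.ball 0 r, f x ≤ 4 * ((n : ℝ) * (K/R)^2 * I) := by
    intro R hR r hr hrR
    set χ : EuclideanSpace ℝ (Fin n) → ℝ := cut n R with hχdef
    have hχ : ContDiff ℝ 2 χ := cut_smooth hR
    have hχs : HasCompactSupport χ := cut_supp hR
    set P : EuclideanSpace ℝ (Fin n) → ℝ := fun x => (χ x)^2*(u₀ x)^2 * (∑ i, (G i x)^2)
      with hPdef
    set Cr : EuclideanSpace ℝ (Fin n) → ℝ :=
      fun x => 2*(χ x)*(u₀ x)^2 * (∑ i, fderiv ℝ χ x (sg n i) * G i x) with hCdef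
    set W : EuclideanSpace ℝ (Fin n) → ℝ :=
      fun x => (u₀ x)^2 * (∑ i, (fderiv ℝ χ x (sg n i))^2) with hWdef
    have hdxcont : ∀ i, Continuous fun x => fderiv ℝ χ x (sg n i) :=
      fun i => (hχ.continuous_fderiv (by norm_num)).clm_apply continuous_const
    have hPcont : Continuous P := by
      apply Continuous.mul ((hχ.continuous.pow 2).mul (hu₀.continuous.pow 2))
      exact continuous_finset_sum _ fun i _ => (hGcont i).pow 2
    have hPsupp : HasCompactSupport P := by
      apply HasCompactSupport.intro hχs
      intro x hx
      simp [hPdef, image_eq_zero_of_notMem_tsupport hx]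
    have hPint : Integrable P := hPcont.integrable_of_hasCompactSupport hPsupp
    have hCcont : Continuous Cr := by
      apply Continuous.mul ((continuous_const.mul hχ.continuous).mul (hu₀.continuous.pow 2))
      exact continuous_finset_sum _ fun i _ => (hdxcont i).mul (hGcont i)
    have hCsupp : HasCompactSupport Cr := by
      apply HasCompactSupport.intro hχs
      intro x hx
      simp [hCdef, image_eq_zero_of_notMem_tsupport hx]
    have hCint : Integrable Cr := hCcont.integrable_of_hasCompactSupport hCsupp
    have hWcont : Continuous W := by
      apply Continuous.mul (hu₀.continuous.pow 2)
      exact continuous_finset_sum _ fun i _ => (hdxcont i).pow 2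
    have hWsupp : HasCompactSupport W := by
      apply HasCompactSupport.intro (hχs.fderiv (𝕜 := ℝ))
      intro x hx
      have h0 : fderiv ℝ χ x = 0 := image_eq_zero_of_notMem_tsupport hx
      simp [hWdef, h0]
    have hWint : Integrable W := hWcont.integrable_of_hasCompactSupport hWsupp
    -- divergence theorem: ∫ Cr = ∫ P
    have hCP : ∫ x, Cr x = ∫ x, P x := by
      have hdiv := div_int_zero_euc hn (Xf u₀ v χ)
        (fun i => Xf_contDiff u₀ v χ hu₀ hu₀pos hv hvpos hχ i)
        (fun i => Xf_supp u₀ v χ hχs i)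
      have heq : ∀ x : EuclideanSpace ℝ (Fin n),
          ∑ i, fderiv ℝ (Xf u₀ v χ i) x (EuclideanSpace.single i 1) = Cr x - P x := by
        intro x
        exact sum_div_Xf V u₀ v χ hu₀ hu₀pos hv hvpos hχ hu₀eq hveq x
      rw [show (fun x : EuclideanSpace ℝ (Fin n) =>
        ∑ i, fderiv ℝ (Xf u₀ v χ i) x (EuclideanSpace.single i 1)) = fun x => Cr x - P x
        from funext heq] at hdiv
      rw [integral_sub hCint hPint] at hdiv
      linarith
    -- pointwise AM-GM: Cr ≤ (1/2) P + 2 W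
    have hAM : ∀ x, Cr x ≤ (1/2) * P x + 2 * W x := by
      intro x
      have h : ∀ i : Fin n, 2*(χ x)*(u₀ x)^2 * (fderiv ℝ χ x (sg n i) * G i x)
          ≤ (1/2) * ((χ x)^2*(u₀ x)^2 * (G i x)^2)
            + 2 * ((u₀ x)^2 * (fderiv ℝ χ x (sg n i))^2) := by
        intro i
        nlinarith [sq_nonneg (χ x * (u₀ x) * G i x - 2 * (u₀ x) * fderiv ℝ χ x (sg n i)),
          sq_nonneg (u₀ x)]
      calc Cr x = ∑ i, 2*(χ x)*(u₀ x)^2 * (fderiv ℝ χ x (sg n i) * G i x) := by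
            simp only [hCdef]; rw [Finset.mul_sum]
        _ ≤ ∑ i, ((1/2) * ((χ x)^2*(u₀ x)^2 * (G i x)^2)
              + 2 * ((u₀ x)^2 * (fderiv ℝ χ x (sg n i))^2)) :=
            Finset.sum_le_sum fun i _ => h i
        _ = (1/2) * P x + 2 * W x := by
            simp only [hPdef, hWdef, Finset.mul_sum, ← Finset.sum_add_distrib]
            try exact Finset.sum_congr rfl fun i _ => by ring
    have hPW : ∫ x, P x ≤ 4 * ∫ x, W x := by
      have h1 : ∫ x, Cr x ≤ ∫ x, ((1/2) * P x + 2 * W x) :=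
        integral_mono hCint ((hPint.const_mul _).add (hWint.const_mul _)) hAM
      rw [integral_add (hPint.const_mul _) (hWint.const_mul _),
        integral_const_mul, integral_const_mul] at h1
      rw [hCP] at h1
      linarith
    -- W is bounded by (K/R)² n u₀²
    have hWbound : ∫ x, W x ≤ (n : ℝ) * (K/R)^2 * I := by
      have hbd : ∀ x, W x ≤ ((n : ℝ) * (K/R)^2) * (u₀ x)^2 := by
        intro x
        have hsum : (∑ i, (fderiv ℝ χ x (sg n i))^2) ≤ (n : ℝ) * (K/R)^2 := by
          have hterm : ∀ i : Fin n, (fderiv ℝ χ x (sg n i))^2 ≤ (K/R)^2 := by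
            intro i
            have habs : |fderiv ℝ χ x (sg n i)| ≤ K/R := by
              rw [cut_deriv hR x]
              rw [abs_mul, abs_inv, abs_of_pos hR]
              have h1 : |fderiv ℝ (bump n) (R⁻¹ • x) (sg n i)| ≤ K := by
                calc |fderiv ℝ (bump n) (R⁻¹ • x) (sg n i)|
                    ≤ ‖fderiv ℝ (bump n) (R⁻¹ • x)‖ * ‖sg n i‖ :=
                      (fderiv ℝ (bump n) (R⁻¹ • x)).le_opNorm _
                  _ = ‖fderiv ℝ (bump n) (R⁻¹ • x)‖ := by
                      rw [EuclideanSpace.norm_single]; simp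
                  _ ≤ K := hK _
              rw [div_eq_inv_mul]
              exact mul_le_mul_of_nonneg_left h1 (inv_nonneg.mpr hR.le)
            calc (fderiv ℝ χ x (sg n i))^2 = |fderiv ℝ χ x (sg n i)|^2 := (sq_abs _).symm
              _ ≤ (K/R)^2 := pow_le_pow_left₀ (abs_nonneg _) habs 2
          calc (∑ i, (fderiv ℝ χ x (sg n i))^2) ≤ ∑ _i : Fin n, (K/R)^2 :=
                Finset.sum_le_sum fun i _ => hterm i
            _ = (n : ℝ) * (K/R)^2 := by
                rw [Finset.sum_const]; simp [mul_comm]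
        calc W x = (u₀ x)^2 * (∑ i, (fderiv ℝ χ x (sg n i))^2) := rfl
          _ ≤ (u₀ x)^2 * ((n : ℝ) * (K/R)^2) :=
              mul_le_mul_of_nonneg_left hsum (sq_nonneg _)
          _ = ((n : ℝ) * (K/R)^2) * (u₀ x)^2 := by ring
      have := integral_mono hWint (hu₀L2.const_mul ((n : ℝ) * (K/R)^2)) hbd
      rwa [integral_const_mul] at this
    -- ball integral ≤ ∫ P
    have hballP : ∫ x in Metric.ball 0 r, f x ≤ ∫ x, P x := by
      have heq : ∀ x ∈ Metric.ball (0 : EuclideanSpace ℝ (Fin n)) r, f x = P x := by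
        intro x hx
        have hxr : ‖x‖ ≤ R := by
          rw [Metric.mem_ball, dist_zero_right] at hx
          linarith
        simp only [hPdef, hfdef, hχdef, cut_one hR hxr]
        ring
      rw [setIntegral_congr_fun measurableSet_ball heq]
      exact setIntegral_le_integral hPint (Eventually.of_forall fun x => by
        apply mul_nonneg (mul_nonneg (sq_nonneg _) (sq_nonneg _))
        exact Finset.sum_nonneg fun i _ => sq_nonneg _)
    calc ∫ x in Metric.ball 0 r, f x ≤ ∫ x, P x := hballP
      _ ≤ 4 * ∫ x, W x := hPW
      _ ≤ 4 * ((n : ℝ) * (K/R)^2 * I) := by linarith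
  -- conclude ∫ f over each ball is zero
  have hball0 : ∀ r : ℝ, 0 < r → ∫ x in Metric.ball 0 r, f x = 0 := by
    intro r hr
    have hub : ∫ x in Metric.ball 0 r, f x ≤ 0 := by
      have htend : Tendsto (fun R : ℝ => 4 * ((n : ℝ) * (K/R)^2 * I)) atTop (nhds 0) := by
        have h1 : Tendsto (fun R : ℝ => K/R) atTop (nhds 0) :=
          tendsto_const_nhds.div_atTop tendsto_id
        have h2 : Tendsto (fun R : ℝ => 4 * ((n : ℝ) * (K/R)^2 * I)) atTop
            (nhds (4 * ((n : ℝ) * (0:ℝ)^2 * I))) := by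
          exact ((((h1.pow 2).const_mul _).mul_const _).const_mul _)
        simpa using h2
      apply ge_of_tendsto htend
      filter_upwards [eventually_ge_atTop (max r 1)] with R hR
      exact hkey R (lt_of_lt_of_le one_pos ((le_max_right r 1).trans hR)) r hr
        ((le_max_left r 1).trans hR)
    have hlb : 0 ≤ ∫ x in Metric.ball 0 r, f x :=
      setIntegral_nonneg measurableSet_ball fun x _ => hfnn x
    linarith
  -- f is identically zero
  have hf0 : ∀ x, f x = 0 := by
    intro x₀
    by_contra hne
    have hpos : 0 < f x₀ := lt_of_le_of_ne (hfnn x₀) (Ne.symm hne)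
    set r : ℝ := ‖x₀‖ + 1 with hrdef
    have hr : 0 < r := by positivity
    have hx₀ : x₀ ∈ Metric.ball (0 : EuclideanSpace ℝ (Fin n)) r := by
      rw [Metric.mem_ball, dist_zero_right]; simp [hrdef]
    have hIfpos : 0 < ∫ x in Metric.ball 0 r, f x := by
      rw [setIntegral_pos_iff_support_of_nonneg_ae
        (Eventually.of_forall fun x => hfnn x)
        ((hfcont.continuousOn.integrableOn_compact
          (isCompact_closedBall (0 : EuclideanSpace ℝ (Fin n)) r)).mono_set
          Metric.ball_subset_closedBall)]
      apply (IsOpen.measure_pos volume ((isOpen_lt continuous_const hfcont).inter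
        Metric.isOpen_ball) ⟨x₀, hpos, hx₀⟩).trans_le
      apply measure_mono
      intro y hy
      exact ⟨ne_of_gt hy.1, hy.2⟩
    rw [hball0 r hr] at hIfpos
    exact lt_irrefl 0 hIfpos
  -- each G i vanishes identically
  have hGzero : ∀ (i : Fin n) x, G i x = 0 := by
    intro i x
    have hfx := hf0 x
    have h1 : (0:ℝ) < (u₀ x)^2 := pow_pos (hu₀pos x) 2
    have hsum : ∑ j, (G j x)^2 = 0 := by
      rcases mul_eq_zero.mp hfx with h | h
      · exact absurd h h1.ne'
      · exact h
    have h2 := (Finset.sum_eq_zero_iff_of_nonneg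
      (fun j _ => sq_nonneg (G j x))).mp hsum i (Finset.mem_univ i)
    exact sq_eq_zero_iff.mp h2
  -- the quotient w = v / u₀ has vanishing derivative
  set w : EuclideanSpace ℝ (Fin n) → ℝ := fun x => v x / u₀ x with hwdef
  have hwc : ContDiff ℝ 1 w :=
    (hv.of_le (by norm_num)).div (hu₀.of_le (by norm_num)) fun x => (hu₀pos x).ne'
  have hwdiff : Differentiable ℝ w := hwc.differentiable (by norm_num)
  have hdw : ∀ x (i : Fin n), fderiv ℝ w x (sg n i) = 0 := by
    intro x i
    have hvd : DifferentiableAt ℝ v x := (hv.differentiable (by norm_num)) x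
    have hud : DifferentiableAt ℝ u₀ x := (hu₀.differentiable (by norm_num)) x
    have hune : u₀ x ≠ 0 := (hu₀pos x).ne'
    have hvne : v x ≠ 0 := (hvpos x).ne'
    have hG := hGzero i x
    rw [hGdef] at hG
    unfold Gf at hG
    have hnum : fderiv ℝ v x (sg n i) * u₀ x - v x * fderiv ℝ u₀ x (sg n i) = 0 := by
      field_simp at hG
      linarith
    have : w = fun y => v y / u₀ y := hwdef
    rw [this, d_div v u₀ hvd hud hune (sg n i), hnum, zero_div]
  have hfd0 : ∀ x, fderiv ℝ w x = 0 := by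
    intro x
    apply ContinuousLinearMap.ext
    intro y
    have hyrep : y = ∑ i, y i • sg n i := by
      have h := (EuclideanSpace.basisFun (Fin n) ℝ).sum_repr y
      simp only [EuclideanSpace.basisFun_apply, EuclideanSpace.basisFun_repr] at h
      exact h.symm
    calc fderiv ℝ w x y = fderiv ℝ w x (∑ i, y i • sg n i) := by rw [← hyrep]
      _ = ∑ i, y i • fderiv ℝ w x (sg n i) := by
          rw [map_sum]
          exact Finset.sum_congr rfl fun i _ => (fderiv ℝ w x).map_smul _ _
      _ = 0 := by simp [hdw x]
      _ = (0 : EuclideanSpace ℝ (Fin n) →L[ℝ] ℝ) y := by simp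
  have hconst : ∀ x, w x = w 0 := fun x => is_const_of_fderiv_eq_zero hwdiff hfd0 x 0
  refine ⟨v 0 / u₀ 0, div_pos (hvpos 0) (hu₀pos 0), funext fun x => ?_⟩
  have hx := hconst x
  have hune : u₀ x ≠ 0 := (hu₀pos x).ne'
  have hwx : w x = v x / u₀ x := rfl
  have hw0 : w 0 = v 0 / u₀ 0 := rfl
  rw [hwx, hw0] at hx
  field_simp at hx ⊢
  linarith
end
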